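/- Among all spanning trees used for one-port pipelined broadcast of m packets to n nodes, the completion time is at least max(⌈log₂ n⌉, m), and a schedule achieving O(m + log n) exists. -/

import Mathlib

/-- One-port pipelined broadcast of `m` packets from source `s` among `n`
nodes: `P t v` is the set of packets held by node `v` after round `t`.
Initially the source holds all packets and everyone else none; in each round
every node may send one packet it holds to one other node. -/
def IsPipelinedBroadcast (n m : ℕ) (s : Fin n)
    (P : ℕ → Fin n → Set (Fin m)) : Prop :=
  P 0 s = Set.univ ∧ (∀ v, v ≠ s → P 0 v = ∅) ∧
  ∀ t, ∃ send : Fin n → Option (Fin n × Fin m),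
    (∀ u v q, send u = some (v, q) → q ∈ P t u) ∧
    (∀ v, P (t + 1) v = P t v ∪ {q | ∃ u, send u = some (v, q)})

/-!
Lower bounds: in one round every informed node informs at most one further node, so at most
`2 ^ t` nodes hold a packet after `t` rounds; and the only node that can bring a packet into the
rest of the network is the source, which sends one packet per round, so the non-source nodes
jointly hold at most `t` packets after `t` rounds.

Upper bound: use the binary heap on `0, …, n - 1` rooted at the source `0`, node `c ≠ 0` having
parent `(c - 1) / 2`. A node of depth `d` receives packet `q` by round `2 (d + q)` and forwards it
to its odd child in round `2 (d + q) + 1` and to its even child in round `2 (d + q) + 2`; so every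
node sends at most one packet per round and all packets arrive by round `2 (log₂ n + m)`.
-/

section Round

variable {V Q : Type*}

def IsRound (send : V → Option (V × Q)) (P P' : V → Set Q) : Prop :=
  (∀ u v q, send u = some (v, q) → q ∈ P u) ∧
    ∀ v, P' v = P v ∪ {q | ∃ u, send u = some (v, q)}

namespace IsRound

variable {send : V → Option (V × Q)} {P P' : V → Set Q}

theorem mem_iff (h : IsRound send P P') {v : V} {q : Q} :
    q ∈ P' v ↔ q ∈ P v ∨ ∃ u, send u = some (v, q) := by
  rw [h.2 v]
  rfl

theorem ncard_informed_le [Finite V] (h : IsRound send P P') :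
    {v | (P' v).Nonempty}.ncard ≤ 2 * {v | (P v).Nonempty}.ncard := by
  set N := {v | (P v).Nonempty}
  let target : V → V := fun u => ((send u).map Prod.fst).getD u
  have hsub : {v | (P' v).Nonempty} ⊆ N ∪ target '' N := by
    rintro v ⟨q, hq⟩
    rcases h.mem_iff.1 hq with hq | ⟨u, hu⟩
    · exact Or.inl ⟨q, hq⟩
    · exact Or.inr ⟨u, ⟨q, h.1 u v q hu⟩, by simp [target, hu]⟩
  calc _ ≤ (N ∪ target '' N).ncard := Set.ncard_le_ncard hsub
    _ ≤ N.ncard + (target '' N).ncard := Set.ncard_union_le _ _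
    _ ≤ 2 * N.ncard := by
      have := Set.ncard_image_le (f := target) N.toFinite
      omega

theorem ncard_held_off_le [Finite Q] (h : IsRound send P P') (s : V) :
    {q | ∃ v ≠ s, q ∈ P' v}.ncard ≤ {q | ∃ v ≠ s, q ∈ P v}.ncard + 1 := by
  set O := {q | ∃ v ≠ s, q ∈ P v}
  set S := {q | ∃ v, send s = some (v, q)}
  have hsub : {q | ∃ v ≠ s, q ∈ P' v} ⊆ O ∪ S := by
    rintro q ⟨v, hvs, hq⟩
    rcases h.mem_iff.1 hq with hq | ⟨u, hu⟩
    · exact Or.inl ⟨v, hvs, hq⟩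
    by_cases hus : u = s
    · exact Or.inr ⟨v, hus ▸ hu⟩
    · exact Or.inl ⟨u, hus, h.1 u v q hu⟩
  have hS : S.ncard ≤ 1 := by
    refine (Set.ncard_le_one S.toFinite).2 ?_
    rintro a ⟨v, ha⟩ b ⟨w, hb⟩
    rw [ha, Option.some_inj, Prod.mk.injEq] at hb
    exact hb.2
  calc _ ≤ (O ∪ S).ncard := Set.ncard_le_ncard hsub
    _ ≤ O.ncard + S.ncard := Set.ncard_union_le _ _
    _ ≤ O.ncard + 1 := by omega

end IsRound

variable {P : ℕ → V → Set Q}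

theorem ncard_informed_le_two_pow [Finite V]
    (hP : ∀ t, ∃ send : V → Option (V × Q), IsRound send (P t) (P (t + 1))) (t : ℕ) :
    {v | (P t v).Nonempty}.ncard ≤ 2 ^ t * {v | (P 0 v).Nonempty}.ncard := by
  induction t with
  | zero => simp
  | succ t ih =>
    obtain ⟨send, h⟩ := hP t
    calc _ ≤ 2 * {v | (P t v).Nonempty}.ncard := h.ncard_informed_le
      _ ≤ 2 * (2 ^ t * {v | (P 0 v).Nonempty}.ncard) := Nat.mul_le_mul_left 2 ih
      _ = _ := by ring

theorem ncard_held_off_le_add [Finite Q]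
    (hP : ∀ t, ∃ send : V → Option (V × Q), IsRound send (P t) (P (t + 1))) (s : V) (t : ℕ) :
    {q | ∃ v ≠ s, q ∈ P t v}.ncard ≤ {q | ∃ v ≠ s, q ∈ P 0 v}.ncard + t := by
  induction t with
  | zero => simp
  | succ t ih =>
    obtain ⟨send, h⟩ := hP t
    have := h.ncard_held_off_le s
    omega

/-- The broadcast in which packet `q` reaches node `v` exactly in round `A v q`, forwarded by
`parent v`. The hypothesis `hport` is the one-port constraint: no node sends two packets in the
same round. -/
theorem exists_isRound_of_arrival (A : V → Q → ℕ) (parent : V → V) (t : ℕ)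
    (hparent : ∀ v q, A v q ≠ 0 → A (parent v) q < A v q)
    (hport : ∀ v w q r, parent v = parent w → A v q = A w r → A v q ≠ 0 → v = w ∧ q = r) :
    ∃ send : V → Option (V × Q),
      IsRound send (fun v => {q | A v q ≤ t}) (fun v => {q | A v q ≤ t + 1}) := by
  classical
  let send : V → Option (V × Q) := fun u =>
    if h : ∃ p : V × Q, parent p.1 = u ∧ A p.1 p.2 = t + 1 then some h.choose else none
  have hsend : ∀ u v q, send u = some (v, q) ↔ parent v = u ∧ A v q = t + 1 := by
    intro u v q
    constructor
    · intro hs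
      simp only [send] at hs
      split_ifs at hs with hex
      have hspec := hex.choose_spec
      rwa [Option.some_inj.1 hs] at hspec
    · rintro ⟨rfl, hA⟩
      have hex : ∃ p : V × Q, parent p.1 = parent v ∧ A p.1 p.2 = t + 1 := ⟨(v, q), rfl, hA⟩
      obtain ⟨hpar, hAc⟩ := hex.choose_spec
      obtain ⟨h1, h2⟩ := hport _ v _ q hpar (hAc.trans hA.symm) (by omega)
      simp only [send, dif_pos hex, Option.some_inj]
      exact Prod.ext h1 h2
  refine ⟨send, fun u v q hs => ?_, fun v => ?_⟩
  · obtain ⟨rfl, hA⟩ := (hsend u v q).1 hs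
    have := hparent v q (by omega)
    show A (parent v) q ≤ t
    omega
  · ext q
    simp only [Set.mem_union, Set.mem_ofPred_eq, hsend, exists_and_right, exists_eq', true_and]
    omega

end Round

namespace IsPipelinedBroadcast

variable {n m : ℕ} {s : Fin n} {P : ℕ → Fin n → Set (Fin m)}

theorem exists_isRound (h : IsPipelinedBroadcast n m s P) (t : ℕ) :
    ∃ send, IsRound send (P t) (P (t + 1)) :=
  h.2.2 t

theorem clog_le (h : IsPipelinedBroadcast n m s P) (hm : 1 ≤ m) {T : ℕ}
    (hT : ∀ v, P T v = Set.univ) : Nat.clog 2 n ≤ T := by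
  have h0 : {v | (P 0 v).Nonempty}.ncard ≤ 1 := by
    refine (Set.ncard_le_ncard fun v hv => ?_ : _ ≤ ({s} : Set (Fin n)).ncard).trans_eq
      (Set.ncard_singleton s)
    by_contra hvs
    simp [h.2.1 v hvs] at hv
  have hT' : {v | (P T v).Nonempty} = Set.univ :=
    Set.eq_univ_of_forall fun v => ⟨⟨0, hm⟩, by simp [hT v]⟩
  have hpow := ncard_informed_le_two_pow h.exists_isRound T
  rw [hT', Set.ncard_univ, Nat.card_eq_fintype_card, Fintype.card_fin] at hpow
  exact Nat.clog_le_of_le_pow (hpow.trans (by simpa using Nat.mul_le_mul_left (2 ^ T) h0))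

theorem le_of_forall_eq_univ (h : IsPipelinedBroadcast n m s P) (hn : 2 ≤ n) {T : ℕ}
    (hT : ∀ v, P T v = Set.univ) : m ≤ T := by
  have h0 : {q | ∃ v ≠ s, q ∈ P 0 v} = ∅ := by
    ext q
    simp +contextual [h.2.1]
  have : Nontrivial (Fin n) := Fin.nontrivial_iff_two_le.2 hn
  obtain ⟨v, hv⟩ := exists_ne s
  have hT' : {q | ∃ v ≠ s, q ∈ P T v} = Set.univ :=
    Set.eq_univ_of_forall fun q => ⟨v, hv, by simp [hT v]⟩
  have := ncard_held_off_le_add h.exists_isRound s T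
  rwa [hT', h0, Set.ncard_univ, Set.ncard_empty, Nat.card_eq_fintype_card, Fintype.card_fin,
    zero_add] at this

end IsPipelinedBroadcast

theorem isPipelinedBroadcast_of_arrival {n m : ℕ} (s : Fin n) (A : Fin n → Fin m → ℕ)
    (parent : Fin n → Fin n) (hsource : ∀ v q, A v q = 0 ↔ v = s)
    (hparent : ∀ v q, A v q ≠ 0 → A (parent v) q < A v q)
    (hport : ∀ v w q r, parent v = parent w → A v q = A w r → A v q ≠ 0 → v = w ∧ q = r) :
    IsPipelinedBroadcast n m s (fun t v => {q | A v q ≤ t}) := by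
  refine ⟨?_, fun v hv => ?_, fun t => exists_isRound_of_arrival A parent t hparent hport⟩
  · ext q
    simp [(hsource s q).2 rfl]
  · ext q
    simpa [Nat.pos_iff_ne_zero] using mt (hsource v q).1 hv

section Heap

def heapParent (c : ℕ) : ℕ := (c - 1) / 2

theorem heapParent_le (c : ℕ) : heapParent c ≤ c := by
  unfold heapParent
  omega

theorem log_heapParent_succ {c : ℕ} (hc : c ≠ 0) :
    Nat.log 2 (heapParent c + 1) + 1 = Nat.log 2 (c + 1) := by
  have hdiv : heapParent c + 1 = (c + 1) / 2 := by
    unfold heapParent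
    omega
  have hpos : 0 < Nat.log 2 (c + 1) := Nat.log_pos one_lt_two (by omega)
  rw [hdiv, Nat.log_div_base]
  omega

/-- Round in which node `v` of the heap schedule receives packet `q`: `2 (d + q)` at depth
`d = log₂ (v + 1) ≥ 1` for an even node, one round earlier for an odd node. -/
def heapArrival (v q : ℕ) : ℕ :=
  if v = 0 then 0 else 2 * (Nat.log 2 (v + 1) + q) - v % 2

theorem heapArrival_eq_zero_iff {v q : ℕ} : heapArrival v q = 0 ↔ v = 0 := by
  unfold heapArrival
  split_ifs with hv
  · simp [hv]
  · have : 0 < Nat.log 2 (v + 1) := Nat.log_pos one_lt_two (by omega)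
    omega

theorem heapArrival_le (v q : ℕ) : heapArrival v q ≤ 2 * (Nat.log 2 (v + 1) + q) := by
  unfold heapArrival
  split_ifs <;> omega

theorem heapArrival_heapParent_lt {c : ℕ} (hc : c ≠ 0) (q : ℕ) :
    heapArrival (heapParent c) q < heapArrival c q := by
  have hlog := log_heapParent_succ hc
  have := heapArrival_le (heapParent c) q
  have hA : heapArrival c q = 2 * (Nat.log 2 (c + 1) + q) - c % 2 := if_neg hc
  omega

theorem heapArrival_injective_of_heapParent_eq {c c' q q' : ℕ}
    (hpar : heapParent c = heapParent c') (hA : heapArrival c q = heapArrival c' q')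
    (hc : heapArrival c q ≠ 0) : c = c' ∧ q = q' := by
  have hc0 : c ≠ 0 := mt heapArrival_eq_zero_iff.2 hc
  have hc0' : c' ≠ 0 := mt heapArrival_eq_zero_iff.2 (hA ▸ hc)
  have hlog := log_heapParent_succ hc0
  have hlog' := log_heapParent_succ hc0'
  rw [hpar] at hlog
  have hc2 : (c - 1) / 2 = (c' - 1) / 2 := hpar
  unfold heapArrival at hA
  rw [if_neg hc0, if_neg hc0'] at hA
  -- the two children of a node receive in rounds of different parity
  omega

variable {n : ℕ}

theorem isPipelinedBroadcast_heap (hn : 0 < n) (m : ℕ) :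
    IsPipelinedBroadcast n m ⟨0, hn⟩ (fun t v => {q | heapArrival v q ≤ t}) :=
  isPipelinedBroadcast_of_arrival ⟨0, hn⟩ (fun v q => heapArrival v q)
    (fun v => ⟨heapParent v, (heapParent_le v).trans_lt v.isLt⟩)
    (fun _ _ => heapArrival_eq_zero_iff.trans (Fin.ext_iff (b := ⟨0, hn⟩)).symm)
    (fun _ q hv => heapArrival_heapParent_lt (mt heapArrival_eq_zero_iff.2 hv) q)
    (fun _ _ _ _ hpar hA hv =>
      (heapArrival_injective_of_heapParent_eq (Fin.val_eq_of_eq hpar) hA hv).imp Fin.ext Fin.ext)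

theorem heapArrival_lt (v : Fin n) {m : ℕ} (q : Fin m) :
    heapArrival v q < 2 * (m + Nat.clog 2 n) := by
  have hlog : Nat.log 2 (v + 1) ≤ Nat.clog 2 n :=
    (Nat.log_mono_right v.isLt).trans (Nat.log_le_clog 2 n)
  have := heapArrival_le v q
  have := q.isLt
  omega

end Heap

/-- Completion time of one-port pipelined broadcast of `m` packets to `n`
nodes is at least `max ⌈log₂ n⌉ m`, and a schedule finishing in `O(m + log n)`
rounds exists. -/
theorem stmt15 :
    (∀ (n m : ℕ), 2 ≤ n → 1 ≤ m → ∀ (s : Fin n)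
      (P : ℕ → Fin n → Set (Fin m)) (T : ℕ), IsPipelinedBroadcast n m s P →
      (∀ v, P T v = Set.univ) → max (Nat.clog 2 n) m ≤ T) ∧
    (∃ C : ℕ, ∀ (n m : ℕ), 2 ≤ n → 1 ≤ m →
      ∃ (s : Fin n) (P : ℕ → Fin n → Set (Fin m)) (T : ℕ),
        IsPipelinedBroadcast n m s P ∧ (∀ v, P T v = Set.univ) ∧
        T ≤ C * (m + Nat.clog 2 n)) := by
  refine ⟨fun n m hn hm s P T h hT => max_le (h.clog_le hm hT) (h.le_of_forall_eq_univ hn hT),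
    2, fun n m hn _ => ⟨_, _, _, isPipelinedBroadcast_heap (by omega) m, fun v => ?_, le_rfl⟩⟩
  exact Set.eq_univ_of_forall fun q => (heapArrival_lt v q).le
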